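/- Let l, w be positive integers with at least one of l, w odd. Then the reliability polynomials of the two kinds of hammock networks of dimensions (l,w) coincide: h^{(1)}_{l,w}(p) = h^{(2)}_{l,w}(p) for all p. -/

import Mathlib

open scoped Classical

/-- Parity predicate: kind 1 = even points (x+y even), kind 2 = odd points. -/
def HammockPar (i : ℕ) (p : ℤ × ℤ) : Prop :=
  if i = 1 then Even (p.1 + p.2) else Odd (p.1 + p.2)

/-- The set 𝒱_{l,w} of lattice points of the rectangle [0,l] × [0,w]. -/
def HammockVAll (l w : ℕ) : Set (ℤ × ℤ) :=
  {p | 0 ≤ p.1 ∧ p.1 ≤ (l : ℤ) ∧ 0 ≤ p.2 ∧ p.2 ≤ (w : ℤ)}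

/-- The vertex set V^{(i)}_{l,w} of the hammock network of kind `i`. -/
def HammockV (i l w : ℕ) : Set (ℤ × ℤ) :=
  {p | p ∈ HammockVAll l w ∧ HammockPar i p}

/-- The set 𝓔_{l,w} of all diagonal unit edges inside the rectangle. -/
def HammockEAll (l w : ℕ) : Set (Sym2 (ℤ × ℤ)) :=
  {e | ∃ a b : ℤ × ℤ, e = s(a, b) ∧ a ∈ HammockVAll l w ∧ b ∈ HammockVAll l w ∧
      |a.1 - b.1| = 1 ∧ |a.2 - b.2| = 1}

/-- The edge set E^{(i)}_{l,w} of the hammock network of kind `i`. -/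
def HammockE (i l w : ℕ) : Set (Sym2 (ℤ × ℤ)) :=
  {e | e ∈ HammockEAll l w ∧ ∀ p ∈ e, HammockPar i p}

/-- The allowed steps of an X-path. -/
def XStep : Set (ℤ × ℤ) := {(1, 1), (-1, 1), (1, -1), (-1, -1)}

/-- An X-path: a finite sequence of pairwise distinct lattice points, each obtained
from the previous one by a step in `XStep`. -/
def IsXPath (vs : List (ℤ × ℤ)) : Prop :=
  vs.Nodup ∧ vs.Chain' (fun a b => b - a ∈ XStep)

/-- The list of edges of an X-path. -/
def xEdges (vs : List (ℤ × ℤ)) : List (Sym2 (ℤ × ℤ)) :=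
  (vs.zip vs.tail).map fun q => s(q.1, q.2)

/-- A two-terminal network on the diagonal lattice: an edge set together with
a set of source nodes and a set of terminus nodes. -/
structure HNetwork where
  edges : Set (Sym2 (ℤ × ℤ))
  src : Set (ℤ × ℤ)
  tgt : Set (ℤ × ℤ)

/-- `P` is a pathset: `P ⊆ edges` and `P` contains all edges of some X-path
joining a source node to a terminus node. -/
def HNetwork.IsPathset (N : HNetwork) (P : Set (Sym2 (ℤ × ℤ))) : Prop :=
  P ⊆ N.edges ∧ ∃ (vs : List (ℤ × ℤ)) (h : vs ≠ []),
    IsXPath vs ∧ vs.head h ∈ N.src ∧ vs.getLast h ∈ N.tgt ∧ ∀ e ∈ xEdges vs, e ∈ P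

/-- `C` is a cutset: removing `C` leaves no pathset. -/
def HNetwork.IsCutset (N : HNetwork) (C : Set (Sym2 (ℤ × ℤ))) : Prop :=
  C ⊆ N.edges ∧ ¬ N.IsPathset (N.edges \ C)

/-- A minpath: a pathset no proper subset of which is a pathset. -/
def HNetwork.IsMinpath (N : HNetwork) (P : Set (Sym2 (ℤ × ℤ))) : Prop :=
  N.IsPathset P ∧ ∀ Q, Q ⊂ P → ¬ N.IsPathset Q

/-- A mincut: a cutset no proper subset of which is a cutset. -/
def HNetwork.IsMincut (N : HNetwork) (C : Set (Sym2 (ℤ × ℤ))) : Prop :=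
  N.IsCutset C ∧ ∀ D, D ⊂ C → ¬ N.IsCutset D

/-- The hammock network H^{(i)}_{l,w}: sources are its vertices with x = 0,
terminals its vertices with x = l. -/
def hammock (i l w : ℕ) : HNetwork where
  edges := HammockE i l w
  src := {p | p ∈ HammockV i l w ∧ p.1 = 0}
  tgt := {p | p ∈ HammockV i l w ∧ p.1 = (l : ℤ)}

/-- The dual network H̄^{(i)}_{l,w}: vertex set 𝒱 − V^{(i)}, edge set 𝓔 − E^{(i)},
sources the points with y = 0, terminals the points with y = w. -/
def hammockDual (i l w : ℕ) : HNetwork where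
  edges := HammockEAll l w \ HammockE i l w
  src := {p | p ∈ HammockVAll l w \ HammockV i l w ∧ p.2 = 0}
  tgt := {p | p ∈ HammockVAll l w \ HammockV i l w ∧ p.2 = (w : ℤ)}

/-- The complementary edge: ē of e = {(x,y),(x+1,y±1)} is {(x+1,y),(x,y±1)}. -/
def complEdge : Sym2 (ℤ × ℤ) → Sym2 (ℤ × ℤ) :=
  Sym2.lift ⟨fun a b => s((a.1, b.2), (b.1, a.2)), fun _ _ => Sym2.eq_swap⟩

/-- The other kind: 2/1 = 2 and 2/2 = 1. -/
def otherKind (i : ℕ) : ℕ := if i = 1 then 2 else 1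

/-- The edge set E^{(i)}_{l,w} as a finite set. -/
noncomputable def hammockEFinset (i l w : ℕ) : Finset (Sym2 (ℤ × ℤ)) :=
  ((Finset.Icc (0 : ℤ) l) ×ˢ (Finset.Icc (0 : ℤ) w)).sym2.filter (· ∈ HammockE i l w)

/-- The reliability polynomial h^{(i)}_{l,w}(p) = Σ_P p^{|P|} (1-p)^{lw-|P|},
summing over all pathsets P of H^{(i)}_{l,w}. -/
noncomputable def hammockRel (i l w : ℕ) (p : ℝ) : ℝ :=
  ∑ P ∈ (hammockEFinset i l w).powerset.filter (fun P : Finset (Sym2 (ℤ × ℤ)) => (hammock i l w).IsPathset ↑P),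
    p ^ P.card * (1 - p) ^ (l * w - P.card)

/-! Reflecting the rectangle in its vertical (resp. horizontal) midline is a symmetry of the
diagonal lattice that maps the rectangle onto itself; when `l` (resp. `w`) is odd it changes the
parity of `x + y`, so it exchanges the two hammock networks. Being an involution, the reflection
induces a cardinality-preserving bijection between the pathsets of the two networks, so the two
reliability sums agree term by term. -/

lemma mem_xStep_iff {v : ℤ × ℤ} : v ∈ XStep ↔ |v.1| = 1 ∧ |v.2| = 1 := by
  rcases v with ⟨a, b⟩
  simp only [XStep, Set.mem_insert_iff, Set.mem_singleton_iff, Prod.mk.injEq, abs_eq one_pos.le]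
  tauto

lemma neg_mem_xStep {v : ℤ × ℤ} (h : v ∈ XStep) : -v ∈ XStep := by
  simpa [mem_xStep_iff] using h

lemma xEdges_cons_cons (a b : ℤ × ℤ) (t : List (ℤ × ℤ)) :
    xEdges (a :: b :: t) = s(a, b) :: xEdges (b :: t) := rfl

lemma xEdges_map (f : ℤ × ℤ → ℤ × ℤ) (vs : List (ℤ × ℤ)) :
    xEdges (vs.map f) = (xEdges vs).map (Sym2.map f) := by
  simp only [xEdges, ← List.map_tail, List.zip_map, List.map_map]
  rfl

lemma xEdges_concat (vs : List (ℤ × ℤ)) (a : ℤ × ℤ) (h : vs ≠ []) :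
    xEdges (vs ++ [a]) = xEdges vs ++ [s(vs.getLast h, a)] := by
  induction vs with
  | nil => exact absurd rfl h
  | cons b t ih =>
    cases t with
    | nil => rfl
    | cons c t =>
      change s(b, c) :: xEdges (c :: t ++ [a]) = s(b, c) :: (xEdges (c :: t) ++ _)
      rw [ih (List.cons_ne_nil c t), List.getLast_cons (List.cons_ne_nil c t)]

lemma xEdges_reverse (vs : List (ℤ × ℤ)) : xEdges vs.reverse = (xEdges vs).reverse := by
  induction vs with
  | nil => rfl
  | cons a t ih =>
    cases t with
    | nil => rfl
    | cons b t =>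
      have hne : (b :: t).reverse ≠ [] := by simp
      have hlast : (b :: t).reverse.getLast hne = b := by rw [List.getLast_reverse]; rfl
      rw [List.reverse_cons, xEdges_concat _ a hne, hlast, ih, xEdges_cons_cons, List.reverse_cons,
        Sym2.eq_swap]

namespace HNetwork

def swap (N : HNetwork) : HNetwork := ⟨N.edges, N.tgt, N.src⟩

lemma IsPathset.swap {N : HNetwork} {P : Set (Sym2 (ℤ × ℤ))} (hP : N.IsPathset P) :
    N.swap.IsPathset P := by
  obtain ⟨hPE, vs, hne, ⟨hnodup, hchain⟩, hhead, hlast, hedges⟩ := hP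
  refine ⟨hPE, vs.reverse, by simpa using hne, ⟨List.nodup_reverse.mpr hnodup, ?_⟩, ?_, ?_, ?_⟩
  · rw [List.Chain', List.isChain_reverse]
    exact hchain.imp fun a b h => by simpa [flip] using neg_mem_xStep h
  · rw [List.head_reverse]
    exact hlast
  · rw [List.getLast_reverse]
    exact hhead
  · intro e he
    rw [xEdges_reverse, List.mem_reverse] at he
    exact hedges e he

lemma isPathset_swap_iff {N : HNetwork} {P : Set (Sym2 (ℤ × ℤ))} :
    N.swap.IsPathset P ↔ N.IsPathset P :=
  ⟨IsPathset.swap, IsPathset.swap⟩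

lemma IsPathset.image {N M : HNetwork} {σ : ℤ × ℤ → ℤ × ℤ} (hσ : Function.Injective σ)
    (hstep : ∀ a b, a - b ∈ XStep → σ a - σ b ∈ XStep)
    (hedges : ∀ e ∈ N.edges, Sym2.map σ e ∈ M.edges)
    (hsrc : Set.MapsTo σ N.src M.src) (htgt : Set.MapsTo σ N.tgt M.tgt)
    {P : Set (Sym2 (ℤ × ℤ))} (hP : N.IsPathset P) : M.IsPathset (Sym2.map σ '' P) := by
  obtain ⟨hPE, vs, hne, ⟨hnodup, hchain⟩, hhead, hlast, hedgesP⟩ := hP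
  refine ⟨?_, vs.map σ, by simpa using hne, ⟨hnodup.map hσ, ?_⟩, ?_, ?_, ?_⟩
  · rintro _ ⟨e, he, rfl⟩
    exact hedges e (hPE he)
  · rw [List.Chain', List.isChain_map]
    exact hchain.imp fun a b h => hstep b a h
  · simpa [List.head_map] using hsrc hhead
  · simpa [List.getLast_map] using htgt hlast
  · intro e he
    rw [xEdges_map, List.mem_map] at he
    obtain ⟨e, he, rfl⟩ := he
    exact ⟨e, hedgesP e he, rfl⟩

end HNetwork

lemma mem_hammockEFinset {i l w : ℕ} {e : Sym2 (ℤ × ℤ)} :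
    e ∈ hammockEFinset i l w ↔ e ∈ HammockE i l w := by
  refine ⟨fun h => (Finset.mem_filter.mp h).2, fun h => Finset.mem_filter.mpr ⟨?_, h⟩⟩
  obtain ⟨⟨a, b, rfl, ha, hb, -, -⟩, -⟩ := h
  have hbox : ∀ q ∈ HammockVAll l w, q ∈ Finset.Icc (0 : ℤ) l ×ˢ Finset.Icc (0 : ℤ) w :=
    fun q ⟨h₁, h₂, h₃, h₄⟩ => Finset.mem_product.mpr ⟨Finset.mem_Icc.mpr ⟨h₁, h₂⟩,
      Finset.mem_Icc.mpr ⟨h₃, h₄⟩⟩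
  exact Finset.mk_mem_sym2_iff.mpr ⟨hbox a ha, hbox b hb⟩

lemma mem_filter_isPathset_iff {i l w : ℕ} {P : Finset (Sym2 (ℤ × ℤ))} :
    P ∈ (hammockEFinset i l w).powerset.filter
        (fun P : Finset (Sym2 (ℤ × ℤ)) => (hammock i l w).IsPathset ↑P) ↔
      (hammock i l w).IsPathset ↑P := by
  rw [Finset.mem_filter, Finset.mem_powerset, and_iff_right_iff_imp]
  exact fun hP e he => mem_hammockEFinset.mpr (hP.1 he)

lemma hammockRel_eq_of_involutive {i j l w : ℕ} {σ : ℤ × ℤ → ℤ × ℤ}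
    (hσ : Function.Involutive σ)
    (hij : ∀ P, (hammock i l w).IsPathset P → (hammock j l w).IsPathset (Sym2.map σ '' P))
    (hji : ∀ P, (hammock j l w).IsPathset P → (hammock i l w).IsPathset (Sym2.map σ '' P))
    (p : ℝ) : hammockRel i l w p = hammockRel j l w p := by
  have hmap : Function.Involutive (Sym2.map σ) := fun e => by
    rw [Sym2.map_map, hσ.comp_self, Sym2.map_id, id_eq]
  have himage : Function.Involutive (Finset.image (Sym2.map σ)) := fun P => by
    rw [Finset.image_image, hmap.comp_self, Finset.image_id]
  unfold hammockRel
  refine Finset.sum_nbij' (Finset.image (Sym2.map σ)) (Finset.image (Sym2.map σ)) ?_ ?_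
    (fun P _ => himage P) (fun P _ => himage P) ?_
  · intro P hP
    rw [mem_filter_isPathset_iff, Finset.coe_image]
    exact hij _ (mem_filter_isPathset_iff.mp hP)
  · intro P hP
    rw [mem_filter_isPathset_iff, Finset.coe_image]
    exact hji _ (mem_filter_isPathset_iff.mp hP)
  · intro P _
    rw [Finset.card_image_of_injective _ hmap.injective]

section ParityReversing

lemma hammockPar_otherKind_iff {i : ℕ} {q : ℤ × ℤ} :
    HammockPar (otherKind i) q ↔ ¬ HammockPar i q := by
  unfold HammockPar otherKind
  split_ifs <;> simp_all [Int.not_even_iff_odd]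

lemma HammockPar.otherKind_of_odd_add {i : ℕ} {a b : ℤ × ℤ}
    (hab : Odd (a.1 + a.2 + (b.1 + b.2))) (ha : HammockPar i a) : HammockPar (otherKind i) b := by
  rw [hammockPar_otherKind_iff]
  unfold HammockPar at *
  rw [Int.odd_iff] at hab
  split_ifs at * <;> simp only [Int.even_iff, Int.odd_iff] at * <;> omega

variable {l w : ℕ} {σ : ℤ × ℤ → ℤ × ℤ}

lemma mapsTo_hammockV_otherKind (hV : Set.MapsTo σ (HammockVAll l w) (HammockVAll l w))
    (hpar : ∀ q, Odd (q.1 + q.2 + ((σ q).1 + (σ q).2))) (i : ℕ) :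
    Set.MapsTo σ (HammockV i l w) (HammockV (otherKind i) l w) :=
  fun q ⟨hq, hqi⟩ => ⟨hV hq, hqi.otherKind_of_odd_add (hpar q)⟩

lemma map_mem_hammockE_otherKind (hV : Set.MapsTo σ (HammockVAll l w) (HammockVAll l w))
    (hpar : ∀ q, Odd (q.1 + q.2 + ((σ q).1 + (σ q).2)))
    (hstep : ∀ a b, a - b ∈ XStep → σ a - σ b ∈ XStep) {i : ℕ} {e : Sym2 (ℤ × ℤ)}
    (he : e ∈ HammockE i l w) : Sym2.map σ e ∈ HammockE (otherKind i) l w := by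
  obtain ⟨⟨a, b, rfl, ha, hb, hab⟩, hpari⟩ := he
  have hσab := hstep a b (mem_xStep_iff.mpr hab)
  refine ⟨⟨σ a, σ b, rfl, hV ha, hV hb, mem_xStep_iff.mp hσab⟩, ?_⟩
  intro _ hq
  obtain ⟨q, hqe, rfl⟩ := Sym2.mem_map.mp hq
  exact (hpari q hqe).otherKind_of_odd_add (hpar q)

end ParityReversing

section Reflections

def reflectFst (l : ℕ) (q : ℤ × ℤ) : ℤ × ℤ := ((l : ℤ) - q.1, q.2)

def reflectSnd (w : ℕ) (q : ℤ × ℤ) : ℤ × ℤ := (q.1, (w : ℤ) - q.2)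

variable {l w : ℕ}

lemma reflectFst_involutive (l : ℕ) : Function.Involutive (reflectFst l) := fun q => by
  simp [reflectFst]

lemma reflectSnd_involutive (w : ℕ) : Function.Involutive (reflectSnd w) := fun q => by
  simp [reflectSnd]

lemma reflectFst_sub_mem_xStep {a b : ℤ × ℤ} (h : a - b ∈ XStep) :
    reflectFst l a - reflectFst l b ∈ XStep := by
  rw [mem_xStep_iff] at h ⊢
  simpa [reflectFst, abs_sub_comm] using h

lemma reflectSnd_sub_mem_xStep {a b : ℤ × ℤ} (h : a - b ∈ XStep) :
    reflectSnd w a - reflectSnd w b ∈ XStep := by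
  rw [mem_xStep_iff] at h ⊢
  simpa [reflectSnd, abs_sub_comm] using h

lemma mapsTo_reflectFst : Set.MapsTo (reflectFst l) (HammockVAll l w) (HammockVAll l w) :=
  fun q ⟨h₁, h₂, h₃, h₄⟩ => ⟨by simp [reflectFst, h₂], by simp [reflectFst, h₁], h₃, h₄⟩

lemma mapsTo_reflectSnd : Set.MapsTo (reflectSnd w) (HammockVAll l w) (HammockVAll l w) :=
  fun q ⟨h₁, h₂, h₃, h₄⟩ => ⟨h₁, h₂, by simp [reflectSnd, h₄], by simp [reflectSnd, h₃]⟩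

lemma odd_add_reflectFst (hl : Odd l) (q : ℤ × ℤ) :
    Odd (q.1 + q.2 + ((reflectFst l q).1 + (reflectFst l q).2)) := by
  have : q.1 + q.2 + ((reflectFst l q).1 + (reflectFst l q).2) = l + 2 * q.2 := by
    simp only [reflectFst]; ring
  rw [this]
  exact (hl.natCast (R := ℤ)).add_even (even_two_mul _)

lemma odd_add_reflectSnd (hw : Odd w) (q : ℤ × ℤ) :
    Odd (q.1 + q.2 + ((reflectSnd w q).1 + (reflectSnd w q).2)) := by
  have : q.1 + q.2 + ((reflectSnd w q).1 + (reflectSnd w q).2) = w + 2 * q.1 := by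
    simp only [reflectSnd]; ring
  rw [this]
  exact (hw.natCast (R := ℤ)).add_even (even_two_mul _)

-- The reflection exchanges sources and terminus nodes, so the image path is read backwards.
lemma HNetwork.IsPathset.image_reflectFst (hl : Odd l) {i : ℕ} {P : Set (Sym2 (ℤ × ℤ))}
    (hP : (hammock i l w).IsPathset P) :
    (hammock (otherKind i) l w).IsPathset (Sym2.map (reflectFst l) '' P) := by
  have hV := mapsTo_hammockV_otherKind (mapsTo_reflectFst (w := w)) (odd_add_reflectFst hl) i
  refine HNetwork.isPathset_swap_iff.mp <| hP.image (reflectFst_involutive l).injective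
    (fun _ _ => reflectFst_sub_mem_xStep)
    (fun _ => map_mem_hammockE_otherKind mapsTo_reflectFst (odd_add_reflectFst hl)
      (fun _ _ => reflectFst_sub_mem_xStep)) ?_ ?_
  · exact fun q ⟨hq, hx⟩ => ⟨hV hq, by simp [reflectFst, hx]⟩
  · exact fun q ⟨hq, hx⟩ => ⟨hV hq, by simp [reflectFst, hx]⟩

lemma HNetwork.IsPathset.image_reflectSnd (hw : Odd w) {i : ℕ} {P : Set (Sym2 (ℤ × ℤ))}
    (hP : (hammock i l w).IsPathset P) :
    (hammock (otherKind i) l w).IsPathset (Sym2.map (reflectSnd w) '' P) := by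
  have hV := mapsTo_hammockV_otherKind (mapsTo_reflectSnd (l := l)) (odd_add_reflectSnd hw) i
  refine hP.image (reflectSnd_involutive w).injective
    (fun _ _ => reflectSnd_sub_mem_xStep)
    (fun _ => map_mem_hammockE_otherKind mapsTo_reflectSnd (odd_add_reflectSnd hw)
      (fun _ _ => reflectSnd_sub_mem_xStep)) ?_ ?_
  · exact fun q ⟨hq, hx⟩ => ⟨hV hq, hx⟩
  · exact fun q ⟨hq, hx⟩ => ⟨hV hq, hx⟩

end Reflections

theorem hammockRel_kinds_eq_general (l w : ℕ)
    (hodd : Odd l ∨ Odd w) :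
    ∀ p : ℝ, hammockRel 1 l w p = hammockRel 2 l w p := by
  rcases hodd with hl | hw
  · exact hammockRel_eq_of_involutive (reflectFst_involutive l)
      (fun _ hP => hP.image_reflectFst hl) (fun _ hP => hP.image_reflectFst hl)
  · exact hammockRel_eq_of_involutive (reflectSnd_involutive w)
      (fun _ hP => hP.image_reflectSnd hw) (fun _ hP => hP.image_reflectSnd hw)

/-- If at least one of l, w is odd, then the reliability polynomials
of the two kinds of hammock networks of dimensions (l,w) coincide. -/
theorem hammockRel_kinds_eq (l w : ℕ) (hl : 0 < l) (hw : 0 < w)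
    (hodd : Odd l ∨ Odd w) :
    ∀ p : ℝ, hammockRel 1 l w p = hammockRel 2 l w p :=
  hammockRel_kinds_eq_general l w hodd
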